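/- arXiv:2402.11471 — 11 statements merged into one kernel-verified Lean document; each statement's English description precedes it below -/
import Mathlib

section
/- With ρ₁⁻, ρ₂⁻, ρ₁⁺, ρ₂⁺ as defined and β ∈ (-1,1), we have 1 - c₁(q) = ((1-β)ρ₂⁻ - (1+β)ρ₁⁺)/((1-β)(ρ₂⁻ - ρ₁⁻)) > 0, i.e., c₁(q) < 1. -/
lemma abs_lt_sqrt_sq_add (a : ℝ) {c : ℝ} (hc : 0 < c) : |a| < √(a ^ 2 + c) := by
  rw [← Real.sqrt_sq_eq_abs]
  exact Real.sqrt_lt_sqrt (sq_nonneg a) (lt_add_of_pos_right _ hc)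

lemma neg_add_sqrt_sq_add_pos (a : ℝ) {c : ℝ} (hc : 0 < c) : 0 < -a + √(a ^ 2 + c) := by
  linarith [le_abs_self a, abs_lt_sqrt_sq_add a hc]

lemma add_sqrt_sq_add_pos (a : ℝ) {c : ℝ} (hc : 0 < c) : 0 < a + √(a ^ 2 + c) := by
  linarith [neg_abs_le a, abs_lt_sqrt_sq_add a hc]

theorem c1_lt_one_general (q μp μm β : ℝ) (hq : 0 < q) (hβ : β ∈ Set.Ioo (-1 : ℝ) 1)
    (ρ1m ρ2m ρ1p c₁ : ℝ)
    (hρ1m : ρ1m = -(μm + Real.sqrt (μm^2 + 2*q)))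
    (hρ2m : ρ2m = -μm + Real.sqrt (μm^2 + 2*q))
    (hρ1p : ρ1p = -(μp + Real.sqrt (μp^2 + 2*q)))
    (hc₁ : c₁ = ((1+β)*ρ1p - (1-β)*ρ1m) / ((1-β)*(ρ2m - ρ1m))) :
    1 - c₁ = ((1-β)*ρ2m - (1+β)*ρ1p) / ((1-β)*(ρ2m - ρ1m)) ∧
    0 < 1 - c₁ ∧ c₁ < 1 := by
  obtain ⟨hβ₁, hβ₂⟩ := hβ
  have h2q : 0 < 2 * q := by positivity
  have hρ2m_pos : 0 < ρ2m := hρ2m ▸ neg_add_sqrt_sq_add_pos μm h2q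
  have hρ1m_neg : ρ1m < 0 := hρ1m ▸ neg_neg_of_pos (add_sqrt_sq_add_pos μm h2q)
  have hρ1p_neg : ρ1p < 0 := hρ1p ▸ neg_neg_of_pos (add_sqrt_sq_add_pos μp h2q)
  have hden : 0 < (1-β)*(ρ2m - ρ1m) := mul_pos (by linarith) (by linarith)
  have hnum : 0 < (1-β)*ρ2m - (1+β)*ρ1p :=
    sub_pos.2 ((mul_neg_of_pos_of_neg (by linarith) hρ1p_neg).trans
      (mul_pos (by linarith) hρ2m_pos))
  have heq : 1 - c₁ = ((1-β)*ρ2m - (1+β)*ρ1p) / ((1-β)*(ρ2m - ρ1m)) := by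
    rw [hc₁, one_sub_div hden.ne']
    congr 1
    ring
  have hpos : 0 < 1 - c₁ := heq ▸ div_pos hnum hden
  exact ⟨heq, hpos, sub_pos.1 hpos⟩

theorem c1_lt_one (q μp μm β : ℝ) (hq : 0 < q) (hβ : β ∈ Set.Ioo (-1 : ℝ) 1)
    (ρ1m ρ2m ρ1p ρ2p c₁ : ℝ)
    (hρ1m : ρ1m = -(μm + Real.sqrt (μm^2 + 2*q)))
    (hρ2m : ρ2m = -μm + Real.sqrt (μm^2 + 2*q))
    (hρ1p : ρ1p = -(μp + Real.sqrt (μp^2 + 2*q)))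
    (hρ2p : ρ2p = -μp + Real.sqrt (μp^2 + 2*q))
    (hc₁ : c₁ = ((1+β)*ρ1p - (1-β)*ρ1m) / ((1-β)*(ρ2m - ρ1m))) :
    1 - c₁ = ((1-β)*ρ2m - (1+β)*ρ1p) / ((1-β)*(ρ2m - ρ1m)) ∧
    0 < 1 - c₁ ∧ c₁ < 1 :=
  c1_lt_one_general q μp μm β hq hβ ρ1m ρ2m ρ1p c₁ hρ1m hρ2m hρ1p hc₁
end

section
/- With the notation as defined and β ∈ (-1,1), the identity 1 - c₁(q)c₂(q) = ((1-β²)(ρ₂⁻ρ₂⁺ + ρ₁⁻ρ₁⁺) + 4q(1+β²)) / ((1-β²)(ρ₂⁻ - ρ₁⁻)(ρ₂⁺ - ρ₁⁺)) holds, and this quantity is strictly positive; in particular c₁(q)c₂(q) < 1. -/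
lemma sqrt_prod_aux (q a b x y : ℝ) (hq : 0 < q) (hx2 : x^2 = a^2 + 2*q)
    (hy2 : y^2 = b^2 + 2*q) (hx : 0 < x) (hy : 0 < y) : a*b < x*y := by
  have h1 : (x*y)^2 = (a^2 + 2*q)*(b^2 + 2*q) := by rw [mul_pow, hx2, hy2]
  nlinarith [mul_pos hx hy, sq_nonneg a, sq_nonneg b]

theorem c1c2_lt_one (q μp μm β : ℝ) (hq : 0 < q) (hβ : β ∈ Set.Ioo (-1 : ℝ) 1)
    (ρ1m ρ2m ρ1p ρ2p c₁ c₂ : ℝ)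
    (hρ1m : ρ1m = -(μm + Real.sqrt (μm^2 + 2*q)))
    (hρ2m : ρ2m = -μm + Real.sqrt (μm^2 + 2*q))
    (hρ1p : ρ1p = -(μp + Real.sqrt (μp^2 + 2*q)))
    (hρ2p : ρ2p = -μp + Real.sqrt (μp^2 + 2*q))
    (hc₁ : c₁ = ((1+β)*ρ1p - (1-β)*ρ1m) / ((1-β)*(ρ2m - ρ1m)))
    (hc₂ : c₂ = ((1+β)*ρ2p - (1-β)*ρ2m) / ((1+β)*(ρ2p - ρ1p))) :
    1 - c₁*c₂ = ((1-β^2)*(ρ2m*ρ2p + ρ1m*ρ1p) + 4*q*(1+β^2)) /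
      ((1-β^2)*(ρ2m - ρ1m)*(ρ2p - ρ1p)) ∧
    0 < 1 - c₁*c₂ ∧ c₁*c₂ < 1 := by
  obtain ⟨hβ1, hβ2⟩ := hβ
  set sm := Real.sqrt (μm^2 + 2*q) with hsm_def
  set sp := Real.sqrt (μp^2 + 2*q) with hsp_def
  have hmq : (0:ℝ) < μm^2 + 2*q := by positivity
  have hsm_sqrt := hsm_def; have hsp_sqrt := hsp_def
  clear_value sm sp
  have hpq : (0:ℝ) < μp^2 + 2*q := by positivity
  have hsm2 : sm^2 = μm^2 + 2*q := by rw [hsm_sqrt]; exact Real.sq_sqrt hmq.le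
  have hsp2 : sp^2 = μp^2 + 2*q := by rw [hsp_sqrt]; exact Real.sq_sqrt hpq.le
  have hsm0 : 0 < sm := by rw [hsm_sqrt]; exact Real.sqrt_pos.mpr hmq
  have hsp0 : 0 < sp := by rw [hsp_sqrt]; exact Real.sqrt_pos.mpr hpq
  clear hsm_sqrt hsp_sqrt hsm_def hsp_def
  have h1b : (0:ℝ) < 1 - β := by linarith
  have h2b : (0:ℝ) < 1 + β := by linarith
  have hβsq : (0:ℝ) < 1 - β^2 := by nlinarith
  have hdm : ρ2m - ρ1m = 2*sm := by rw [hρ1m, hρ2m]; ring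
  have hdp : ρ2p - ρ1p = 2*sp := by rw [hρ1p, hρ2p]; ring
  have hdm0 : ρ2m - ρ1m ≠ 0 := by rw [hdm]; positivity
  have hdp0 : ρ2p - ρ1p ≠ 0 := by rw [hdp]; positivity
  have hprodm : ρ1m * ρ2m = -(2*q) := by rw [hρ1m, hρ2m]; nlinarith [hsm2]
  have hprodp : ρ1p * ρ2p = -(2*q) := by rw [hρ1p, hρ2p]; nlinarith [hsp2]
  have key : (1-β^2)*(ρ2m - ρ1m)*(ρ2p - ρ1p)
      - ((1+β)*ρ1p - (1-β)*ρ1m) * ((1+β)*ρ2p - (1-β)*ρ2m)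
      = (1-β^2)*(ρ2m*ρ2p + ρ1m*ρ1p) + 4*q*(1+β^2) := by
    linear_combination (-(1+β)^2) * hprodp + (-(1-β)^2) * hprodm
  have heq : 1 - c₁*c₂ = ((1-β^2)*(ρ2m*ρ2p + ρ1m*ρ1p) + 4*q*(1+β^2)) /
      ((1-β^2)*(ρ2m - ρ1m)*(ρ2p - ρ1p)) := by
    have hden' : ((1-β^2)*(ρ2m - ρ1m)*(ρ2p - ρ1p)) ≠ 0 := by
      rw [hdm, hdp]; positivity
    have hD : ((1-β)*(ρ2m - ρ1m)) * ((1+β)*(ρ2p - ρ1p))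
        = (1-β^2)*(ρ2m - ρ1m)*(ρ2p - ρ1p) := by ring
    rw [hc₁, hc₂, div_mul_div_comm, hD, ← key, sub_div, div_self hden']
  have hnum : 0 < (1-β^2)*(ρ2m*ρ2p + ρ1m*ρ1p) + 4*q*(1+β^2) := by
    have h2 : ρ2m*ρ2p + ρ1m*ρ1p = 2*(sm*sp + μm*μp) := by
      rw [hρ1m, hρ2m, hρ1p, hρ2p]; ring
    rw [h2]
    have hss : μm*μp < sm*sp := sqrt_prod_aux q μm μp sm sp hq hsm2 hsp2 hsm0 hsp0
    have hss2 : (-μm)*μp < sm*sp :=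
      sqrt_prod_aux q (-μm) μp sm sp hq (by rw [hsm2]; ring) hsp2 hsm0 hsp0
    have hpos2 : 0 < sm*sp + μm*μp := by nlinarith [hss2]
    have hA : 0 < (1-β^2) * (2*(sm*sp + μm*μp)) := by positivity
    have hB : 0 < 4*q*(1+β^2) := by positivity
    linarith
  have hden : 0 < (1-β^2)*(ρ2m - ρ1m)*(ρ2p - ρ1p) := by
    rw [hdm, hdp]; positivity
  have hpos : 0 < 1 - c₁*c₂ := by
    rw [heq]; positivity
  exact ⟨heq, hpos, by linarith⟩
end

section
/- The function g₂(x) := (1-c₂)e^{ρ₂⁺(x-a)} + c₂ e^{ρ₁⁺(x-a)} for x > a and g₂(x) := e^{ρ₂⁻(x-a)} for x ≤ a satisfies (1/2)g₂''(x) + μ₊ g₂'(x) = q g₂(x) for x > a, (1/2)g₂''(x) + μ₋ g₂'(x) = q g₂(x) for x < a, and (1+β)g₂'(a+) = (1-β)g₂'(a-). -/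
/-!
Both roots `ρ = -μ ± √(μ² + 2q)` solve the characteristic equation `ρ²/2 + μρ = q`, so on each
side of `a` the function `g₂` is a combination of exponentials solving the corresponding ODE.
At `a` both pieces equal `1`, so the one-sided derivatives are those of the pieces, namely
`(1 - c₂)ρ₂⁺ + c₂ρ₁⁺ = ρ₂⁺ - c₂(ρ₂⁺ - ρ₁⁺)` and `ρ₂⁻`; the value of `c₂` is exactly the one
making `(1 + β)` times the first equal to `(1 - β)` times the second.
-/

open Filter Set Topology Real

lemma half_sq_add_mul_eq_of_add_sq_eq {ρ μ q : ℝ} (h : (ρ + μ) ^ 2 = μ ^ 2 + 2 * q) :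
    (1 / 2) * ρ ^ 2 + μ * ρ = q := by
  linear_combination h / 2

noncomputable def expComb (a c₁ ρ₁ c₂ ρ₂ x : ℝ) : ℝ :=
  c₁ * exp (ρ₁ * (x - a)) + c₂ * exp (ρ₂ * (x - a))

section ExpComb

variable (a c₁ ρ₁ c₂ ρ₂ : ℝ)

lemma expComb_self : expComb a c₁ ρ₁ c₂ ρ₂ a = c₁ + c₂ := by
  simp [expComb]

lemma hasDerivAt_expComb (x : ℝ) :
    HasDerivAt (expComb a c₁ ρ₁ c₂ ρ₂) (expComb a (c₁ * ρ₁) ρ₁ (c₂ * ρ₂) ρ₂ x) x := by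
  have hexp (ρ : ℝ) : HasDerivAt (fun y => exp (ρ * (y - a))) (exp (ρ * (x - a)) * ρ) x := by
    simpa using (((hasDerivAt_id x).sub_const a).const_mul ρ).exp
  exact (((hexp ρ₁).const_mul c₁).add ((hexp ρ₂).const_mul c₂)).congr_deriv
    (by simp only [expComb]; ring)

lemma deriv_expComb :
    deriv (expComb a c₁ ρ₁ c₂ ρ₂) = expComb a (c₁ * ρ₁) ρ₁ (c₂ * ρ₂) ρ₂ :=
  funext fun x => (hasDerivAt_expComb a c₁ ρ₁ c₂ ρ₂ x).deriv

lemma expComb_ode {μ q : ℝ} (h₁ : (1 / 2) * ρ₁ ^ 2 + μ * ρ₁ = q)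
    (h₂ : (1 / 2) * ρ₂ ^ 2 + μ * ρ₂ = q) (x : ℝ) :
    (1 / 2) * deriv (deriv (expComb a c₁ ρ₁ c₂ ρ₂)) x + μ * deriv (expComb a c₁ ρ₁ c₂ ρ₂) x =
      q * expComb a c₁ ρ₁ c₂ ρ₂ x := by
  simp only [deriv_expComb, expComb]
  linear_combination c₁ * exp (ρ₁ * (x - a)) * h₁ + c₂ * exp (ρ₂ * (x - a)) * h₂

end ExpComb

lemma ode_of_eventuallyEq {f g : ℝ → ℝ} {x μ q : ℝ} (hfg : f =ᶠ[𝓝 x] g)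
    (hg : (1 / 2) * deriv (deriv g) x + μ * deriv g x = q * g x) :
    (1 / 2) * deriv (deriv f) x + μ * deriv f x = q * f x := by
  rwa [hfg.deriv.deriv_eq, hfg.deriv_eq, hfg.eq_of_nhds]

section Piecewise

variable {g f h : ℝ → ℝ} {a : ℝ} (hg : ∀ x, g x = if a < x then f x else h x)
include hg

lemma eventuallyEq_of_eq_ite_of_lt {x : ℝ} (hx : a < x) : g =ᶠ[𝓝 x] f := by
  filter_upwards [eventually_gt_nhds hx] with y hy
  simp [hg, hy]

lemma eventuallyEq_of_eq_ite_of_gt {x : ℝ} (hx : x < a) : g =ᶠ[𝓝 x] h := by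
  filter_upwards [eventually_lt_nhds hx] with y hy
  simp [hg, not_lt.mpr hy.le]

lemma derivWithin_Ici_of_eq_ite (hfa : f a = h a) (hf : DifferentiableAt ℝ f a) :
    derivWithin g (Ici a) a = deriv f a := by
  have heq : EqOn g f (Ici a) := fun y hy => by
    rcases (mem_Ici.mp hy).eq_or_lt with rfl | hlt
    · simp [hg, hfa]
    · simp [hg, hlt]
  rw [derivWithin_congr heq (heq self_mem_Ici),
    hf.derivWithin (uniqueDiffOn_Ici a a self_mem_Ici)]

lemma derivWithin_Iic_of_eq_ite (hh : DifferentiableAt ℝ h a) :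
    derivWithin g (Iic a) a = deriv h a := by
  have heq : EqOn g h (Iic a) := fun y hy => by simp [hg, not_lt.mpr (mem_Iic.mp hy)]
  rw [derivWithin_congr heq (heq self_mem_Iic),
    hh.derivWithin (uniqueDiffOn_Iic a a self_mem_Iic)]

end Piecewise

theorem g2_ode_general (q a μp μm β : ℝ) (hq : 0 < q)
    (hβ : β ∈ Set.Ioo (-1 : ℝ) 1)
    (ρ2m ρ1p ρ2p c₂ : ℝ)
    (hρ2m : ρ2m = -μm + Real.sqrt (μm^2 + 2*q))
    (hρ1p : ρ1p = -(μp + Real.sqrt (μp^2 + 2*q)))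
    (hρ2p : ρ2p = -μp + Real.sqrt (μp^2 + 2*q))
    (hc₂ : c₂ = ((1+β)*ρ2p - (1-β)*ρ2m) / ((1+β)*(ρ2p - ρ1p)))
    (g₂ : ℝ → ℝ)
    (hg₂ : ∀ x, g₂ x = if a < x then (1-c₂) * Real.exp (ρ2p*(x-a)) + c₂ * Real.exp (ρ1p*(x-a))
      else Real.exp (ρ2m*(x-a))) :
    (∀ x, a < x → (1/2) * deriv (deriv g₂) x + μp * deriv g₂ x = q * g₂ x) ∧
    (∀ x, x < a → (1/2) * deriv (deriv g₂) x + μm * deriv g₂ x = q * g₂ x) ∧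
    (1+β) * derivWithin g₂ (Set.Ici a) a = (1-β) * derivWithin g₂ (Set.Iic a) a := by
  have hsq (μ : ℝ) : √(μ ^ 2 + 2 * q) ^ 2 = μ ^ 2 + 2 * q := sq_sqrt (by positivity)
  have hρ2m_root : (1 / 2) * ρ2m ^ 2 + μm * ρ2m = q :=
    half_sq_add_mul_eq_of_add_sq_eq (by rw [hρ2m]; linear_combination hsq μm)
  have hρ1p_root : (1 / 2) * ρ1p ^ 2 + μp * ρ1p = q :=
    half_sq_add_mul_eq_of_add_sq_eq (by rw [hρ1p]; linear_combination hsq μp)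
  have hρ2p_root : (1 / 2) * ρ2p ^ 2 + μp * ρ2p = q :=
    half_sq_add_mul_eq_of_add_sq_eq (by rw [hρ2p]; linear_combination hsq μp)
  have hg (x : ℝ) : g₂ x = if a < x then expComb a (1 - c₂) ρ2p c₂ ρ1p x
      else expComb a 1 ρ2m 0 ρ2m x := by
    simp [hg₂, expComb]
  refine ⟨fun x hx => ?_, fun x hx => ?_, ?_⟩
  · exact ode_of_eventuallyEq (eventuallyEq_of_eq_ite_of_lt hg hx)
      (expComb_ode _ _ _ _ _ hρ2p_root hρ1p_root x)
  · exact ode_of_eventuallyEq (eventuallyEq_of_eq_ite_of_gt hg hx)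
      (expComb_ode _ _ _ _ _ hρ2m_root hρ2m_root x)
  · have hβ₁ : 1 + β ≠ 0 := by linarith [hβ.1]
    have hgap : ρ2p - ρ1p ≠ 0 := by
      rw [hρ2p, hρ1p]
      have : 0 < √(μp ^ 2 + 2 * q) := sqrt_pos.mpr (by positivity)
      linarith
    rw [derivWithin_Ici_of_eq_ite hg (by simp [expComb_self])
        (hasDerivAt_expComb _ _ _ _ _ a).differentiableAt,
      derivWithin_Iic_of_eq_ite hg (hasDerivAt_expComb _ _ _ _ _ a).differentiableAt,
      deriv_expComb, deriv_expComb, expComb_self, expComb_self, hc₂]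
    field_simp
    ring

theorem g2_ode (q a μp μm β : ℝ) (hq : 0 < q) (ha : 0 < a)
    (hβ : β ∈ Set.Ioo (-1 : ℝ) 1)
    (ρ1m ρ2m ρ1p ρ2p c₂ : ℝ)
    (hρ1m : ρ1m = -(μm + Real.sqrt (μm^2 + 2*q)))
    (hρ2m : ρ2m = -μm + Real.sqrt (μm^2 + 2*q))
    (hρ1p : ρ1p = -(μp + Real.sqrt (μp^2 + 2*q)))
    (hρ2p : ρ2p = -μp + Real.sqrt (μp^2 + 2*q))
    (hc₂ : c₂ = ((1+β)*ρ2p - (1-β)*ρ2m) / ((1+β)*(ρ2p - ρ1p)))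
    (g₂ : ℝ → ℝ)
    (hg₂ : ∀ x, g₂ x = if a < x then (1-c₂) * Real.exp (ρ2p*(x-a)) + c₂ * Real.exp (ρ1p*(x-a))
      else Real.exp (ρ2m*(x-a))) :
    (∀ x, a < x → (1/2) * deriv (deriv g₂) x + μp * deriv g₂ x = q * g₂ x) ∧
    (∀ x, x < a → (1/2) * deriv (deriv g₂) x + μm * deriv g₂ x = q * g₂ x) ∧
    (1+β) * derivWithin g₂ (Set.Ici a) a = (1-β) * derivWithin g₂ (Set.Iic a) a :=
  g2_ode_general q a μp μm β hq hβ ρ2m ρ1p ρ2p c₂ hρ2m hρ1p hρ2p hc₂ g₂ hg₂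
end

section
/- For 0 ≤ x < a, W(x) = (1-c₁)e^{-(ρ₁⁻+ρ₂⁻)a}(e^{ρ₂⁻x} - e^{ρ₁⁻x}), and this equals ((ρ₂⁻ - ρ₁⁺)e^{2μ₋a}/(ρ₂⁻ - ρ₁⁻))(e^{ρ₂⁻x} - e^{ρ₁⁻x}) when β = 0. -/
/-! On `[0, a]` both `g₁` and `g₂` are combinations of `e^{ρ₁⁻(x-a)}` and `e^{ρ₂⁻(x-a)}`, with
`g₂` the pure `ρ₂⁻` mode; in `W` the `ρ₂⁻` component of `g₁` cancels, leaving `(1 - c₁)` times a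
difference of the two modes. For `β = 0`, `1 - c₁ = (ρ₂⁻ - ρ₁⁺)/(ρ₂⁻ - ρ₁⁻)` and
`ρ₁⁻ + ρ₂⁻ = -2μ₋`. -/

open Real

lemma cross_sub_exp_combination (a c r s x : ℝ) :
    exp (s * (x - a)) * (c * exp (s * (0 - a)) + (1 - c) * exp (r * (0 - a))) -
        (c * exp (s * (x - a)) + (1 - c) * exp (r * (x - a))) * exp (s * (0 - a)) =
      (1 - c) * exp (-(r + s) * a) * (exp (s * x) - exp (r * x)) := by
  have hs : exp (s * (x - a)) * exp (r * (0 - a)) = exp (-(r + s) * a) * exp (s * x) := by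
    rw [← exp_add, ← exp_add]; ring_nf
  have hr : exp (r * (x - a)) * exp (s * (0 - a)) = exp (-(r + s) * a) * exp (r * x) := by
    rw [← exp_add, ← exp_add]; ring_nf
  linear_combination (1 - c) * hs - (1 - c) * hr

theorem W_formula_below_a_general (q a μm β : ℝ) (hq : 0 < q)
    (ρ1m ρ2m ρ1p ρ2p c₁ c₂ : ℝ)
    (hρ1m : ρ1m = -(μm + Real.sqrt (μm^2 + 2*q)))
    (hρ2m : ρ2m = -μm + Real.sqrt (μm^2 + 2*q))
    (hc₁ : c₁ = ((1+β)*ρ1p - (1-β)*ρ1m) / ((1-β)*(ρ2m - ρ1m)))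
    (g₁ g₂ W : ℝ → ℝ)
    (hg₁ : ∀ x, g₁ x = if a < x then Real.exp (ρ1p*(x-a))
      else c₁ * Real.exp (ρ2m*(x-a)) + (1-c₁) * Real.exp (ρ1m*(x-a)))
    (hg₂ : ∀ x, g₂ x = if a < x then (1-c₂) * Real.exp (ρ2p*(x-a)) + c₂ * Real.exp (ρ1p*(x-a))
      else Real.exp (ρ2m*(x-a)))
    (hW : ∀ x, W x = g₂ x * g₁ 0 - g₁ x * g₂ 0) :
    ∀ x, 0 ≤ x → x < a →
      W x = (1-c₁) * Real.exp (-(ρ1m+ρ2m)*a) * (Real.exp (ρ2m*x) - Real.exp (ρ1m*x)) ∧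
      (β = 0 →
        W x = (ρ2m - ρ1p) * Real.exp (2*μm*a) / (ρ2m - ρ1m) *
          (Real.exp (ρ2m*x) - Real.exp (ρ1m*x))) := by
  intro x hx hxa
  have hx_le : ¬a < x := hxa.le.not_gt
  have h0_le : ¬a < 0 := (hx.trans hxa.le).not_gt
  have hWx : W x = (1 - c₁) * exp (-(ρ1m + ρ2m) * a) * (exp (ρ2m * x) - exp (ρ1m * x)) := by
    rw [hW, hg₁ x, hg₂ x, hg₁ 0, hg₂ 0, if_neg hx_le, if_neg hx_le, if_neg h0_le, if_neg h0_le]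
    exact cross_sub_exp_combination a c₁ ρ1m ρ2m x
  refine ⟨hWx, fun hβ => ?_⟩
  have hgap : ρ2m - ρ1m ≠ 0 := by
    have : 0 < √(μm ^ 2 + 2 * q) := sqrt_pos.mpr (by positivity)
    rw [hρ1m, hρ2m]; linarith
  have hc : 1 - c₁ = (ρ2m - ρ1p) / (ρ2m - ρ1m) := by
    rw [hc₁, hβ]; field_simp; ring
  have hsum : -(ρ1m + ρ2m) * a = 2 * μm * a := by rw [hρ1m, hρ2m]; ring
  rw [hWx, hc, hsum]
  ring

theorem W_formula_below_a (q a μp μm β : ℝ) (hq : 0 < q) (ha : 0 < a)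
    (hβ : β ∈ Set.Ioo (-1 : ℝ) 1)
    (ρ1m ρ2m ρ1p ρ2p c₁ c₂ : ℝ)
    (hρ1m : ρ1m = -(μm + Real.sqrt (μm^2 + 2*q)))
    (hρ2m : ρ2m = -μm + Real.sqrt (μm^2 + 2*q))
    (hρ1p : ρ1p = -(μp + Real.sqrt (μp^2 + 2*q)))
    (hρ2p : ρ2p = -μp + Real.sqrt (μp^2 + 2*q))
    (hc₁ : c₁ = ((1+β)*ρ1p - (1-β)*ρ1m) / ((1-β)*(ρ2m - ρ1m)))
    (hc₂ : c₂ = ((1+β)*ρ2p - (1-β)*ρ2m) / ((1+β)*(ρ2p - ρ1p)))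
    (g₁ g₂ W : ℝ → ℝ)
    (hg₁ : ∀ x, g₁ x = if a < x then Real.exp (ρ1p*(x-a))
      else c₁ * Real.exp (ρ2m*(x-a)) + (1-c₁) * Real.exp (ρ1m*(x-a)))
    (hg₂ : ∀ x, g₂ x = if a < x then (1-c₂) * Real.exp (ρ2p*(x-a)) + c₂ * Real.exp (ρ1p*(x-a))
      else Real.exp (ρ2m*(x-a)))
    (hW : ∀ x, W x = g₂ x * g₁ 0 - g₁ x * g₂ 0) :
    ∀ x, 0 ≤ x → x < a →
      W x = (1-c₁) * Real.exp (-(ρ1m+ρ2m)*a) * (Real.exp (ρ2m*x) - Real.exp (ρ1m*x)) ∧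
      (β = 0 →
        W x = (ρ2m - ρ1p) * Real.exp (2*μm*a) / (ρ2m - ρ1m) *
          (Real.exp (ρ2m*x) - Real.exp (ρ1m*x))) :=
  W_formula_below_a_general q a μm β hq ρ1m ρ2m ρ1p ρ2p c₁ c₂ hρ1m hρ2m hc₁ g₁ g₂ W hg₁ hg₂ hW
end

section
/- The function W satisfies the gluing condition (1-β)W'(a-) = (1+β)W'(a+), where W'(a-) = (1-c₁)(ρ₂⁻e^{-ρ₁⁻a} - ρ₁⁻e^{-ρ₂⁻a}) and W'(a+) = ρ₂⁺(c₁e^{-ρ₂⁻a} + (1-c₁)e^{-ρ₁⁻a})(1-c₂) - ρ₁⁺((1-c₁c₂)e^{-ρ₂⁻a} - c₂(1-c₁)e^{-ρ₁⁻a}). -/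
theorem W_deriv_gluing (q a μp μm β : ℝ) (hq : 0 < q) (ha : 0 < a)
    (hβ : β ∈ Set.Ioo (-1 : ℝ) 1)
    (ρ1m ρ2m ρ1p ρ2p c₁ c₂ Wam Wap : ℝ)
    (hρ1m : ρ1m = -(μm + Real.sqrt (μm^2 + 2*q)))
    (hρ2m : ρ2m = -μm + Real.sqrt (μm^2 + 2*q))
    (hρ1p : ρ1p = -(μp + Real.sqrt (μp^2 + 2*q)))
    (hρ2p : ρ2p = -μp + Real.sqrt (μp^2 + 2*q))
    (hc₁ : c₁ = ((1+β)*ρ1p - (1-β)*ρ1m) / ((1-β)*(ρ2m - ρ1m)))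
    (hc₂ : c₂ = ((1+β)*ρ2p - (1-β)*ρ2m) / ((1+β)*(ρ2p - ρ1p)))
    (hWam : Wam = (1-c₁) * (ρ2m * Real.exp (-ρ1m*a) - ρ1m * Real.exp (-ρ2m*a)))
    (hWap : Wap = ρ2p * (c₁ * Real.exp (-ρ2m*a) + (1-c₁) * Real.exp (-ρ1m*a)) * (1-c₂)
      - ρ1p * ((1-c₁*c₂) * Real.exp (-ρ2m*a) - c₂*(1-c₁) * Real.exp (-ρ1m*a))) :
    (1-β) * Wam = (1+β) * Wap := by
  obtain ⟨hβ1, hβ2⟩ := hβ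
  have hb1 : (1-β) ≠ 0 := by linarith
  have hb2 : (1+β) ≠ 0 := by linarith
  have hsm : 0 < Real.sqrt (μm^2 + 2*q) :=
    Real.sqrt_pos.2 (by positivity)
  have hsp : 0 < Real.sqrt (μp^2 + 2*q) :=
    Real.sqrt_pos.2 (by positivity)
  have hdm : ρ2m - ρ1m ≠ 0 := by rw [hρ1m, hρ2m]; nlinarith
  have hdp : ρ2p - ρ1p ≠ 0 := by rw [hρ1p, hρ2p]; nlinarith
  subst hWam hWap hc₁ hc₂
  field_simp
  ring
end

section
/- If μ₊ ≤ 0 then K(β) ≤ 1, where K(β) := (ρ₁⁺)²((1-c₁c₂)e^{-ρ₂⁻a} - c₂(1-c₁)e^{-ρ₁⁻a}) / ((ρ₂⁺)²(1-c₂)(c₁e^{-ρ₂⁻a} + (1-c₁)e^{-ρ₁⁻a})). Consequently, if K(β) > 1 then μ₊ > 0. -/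
theorem K_le_one_of_mu_plus_nonpos (q a μp μm β : ℝ) (hq : 0 < q) (ha : 0 < a)
    (hβ : β ∈ Set.Ioo (-1 : ℝ) 1)
    (ρ1m ρ2m ρ1p ρ2p c₁ c₂ K : ℝ)
    (hρ1m : ρ1m = -(μm + Real.sqrt (μm^2 + 2*q)))
    (hρ2m : ρ2m = -μm + Real.sqrt (μm^2 + 2*q))
    (hρ1p : ρ1p = -(μp + Real.sqrt (μp^2 + 2*q)))
    (hρ2p : ρ2p = -μp + Real.sqrt (μp^2 + 2*q))
    (hc₁ : c₁ = ((1+β)*ρ1p - (1-β)*ρ1m) / ((1-β)*(ρ2m - ρ1m)))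
    (hc₂ : c₂ = ((1+β)*ρ2p - (1-β)*ρ2m) / ((1+β)*(ρ2p - ρ1p)))
    (hK : K = ρ1p^2 * ((1-c₁*c₂) * Real.exp (-ρ2m*a) - c₂*(1-c₁) * Real.exp (-ρ1m*a)) /
      (ρ2p^2 * (1-c₂) * (c₁ * Real.exp (-ρ2m*a) + (1-c₁) * Real.exp (-ρ1m*a)))) :
    (μp ≤ 0 → K ≤ 1) ∧ (1 < K → 0 < μp) := by
  obtain ⟨hβ1, hβ2⟩ := hβ
  have hm : (0:ℝ) < 1 - β := by linarith
  have hp : (0:ℝ) < 1 + β := by linarith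
  have key : μp ≤ 0 → K ≤ 1 := by
    intro hμ
    set sp := Real.sqrt (μp^2 + 2*q) with hsp
    set sm := Real.sqrt (μm^2 + 2*q) with hsm
    have habsp : |μp| < sp := by
      rw [hsp, ← Real.sqrt_sq_eq_abs]
      exact Real.sqrt_lt_sqrt (sq_nonneg μp) (by linarith)
    have habsm : |μm| < sm := by
      rw [hsm, ← Real.sqrt_sq_eq_abs]
      exact Real.sqrt_lt_sqrt (sq_nonneg μm) (by linarith)
    have h1 : -μp ≤ |μp| := neg_le_abs μp
    have h2 : μp ≤ |μp| := le_abs_self μp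
    have h3 : -μm ≤ |μm| := neg_le_abs μm
    have h4 : μm ≤ |μm| := le_abs_self μm
    have hρ1p_neg : ρ1p < 0 := by rw [hρ1p]; linarith
    have hρ2p_pos : 0 < ρ2p := by rw [hρ2p]; linarith
    have hρ1m_neg : ρ1m < 0 := by rw [hρ1m]; linarith
    have hρ2m_pos : 0 < ρ2m := by rw [hρ2m]; linarith
    have hsp_pos : 0 < sp := lt_of_le_of_lt (abs_nonneg μp) habsp
    have hμsp : μp * sp ≤ 0 := mul_nonpos_of_nonpos_of_nonneg hμ hsp_pos.le
    have hρsq : ρ1p^2 ≤ ρ2p^2 := by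
      rw [hρ1p, hρ2p]
      have : (-(μp + sp))^2 - (-μp + sp)^2 = 4 * (μp * sp) := by ring
      nlinarith [this]
    set E2 := Real.exp (-ρ2m*a) with hE2
    set E1 := Real.exp (-ρ1m*a) with hE1
    have hE2pos : 0 < E2 := Real.exp_pos _
    have hE21 : E2 < E1 := by
      apply Real.exp_lt_exp.mpr
      have h5 : 0 < ρ2m * a := mul_pos hρ2m_pos ha
      have h6 : 0 < -ρ1m * a := mul_pos (by linarith) ha
      linarith
    have hkey : (1+β)*ρ1p < (1-β)*ρ2m :=
      (mul_neg_of_pos_of_neg hp hρ1p_neg).trans (mul_pos hm hρ2m_pos)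
    have hc₁lt : c₁ < 1 := by
      rw [hc₁, div_lt_one (mul_pos hm (show 0 < ρ2m - ρ1m by linarith))]
      have : (1-β)*(ρ2m - ρ1m) = (1-β)*ρ2m - (1-β)*ρ1m := by ring
      linarith
    have hc₂lt : c₂ < 1 := by
      rw [hc₂, div_lt_one (mul_pos hp (show 0 < ρ2p - ρ1p by linarith))]
      have : (1+β)*(ρ2p - ρ1p) = (1+β)*ρ2p - (1+β)*ρ1p := by ring
      linarith
    have hext : 0 ≤ (1-c₁)*(E1-E2) :=
      mul_nonneg (by linarith) (by linarith)
    have hD' : 0 < c₁ * E2 + (1-c₁) * E1 := by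
      have : c₁ * E2 + (1-c₁) * E1 = E2 + (1-c₁)*(E1-E2) := by ring
      linarith
    have hBpos : 0 < ρ2p^2 * (1-c₂) * (c₁ * E2 + (1-c₁) * E1) :=
      mul_pos (mul_pos (pow_pos hρ2p_pos 2) (by linarith)) hD'
    rw [hK, div_le_one hBpos]
    set N := (1-c₁*c₂) * E2 - c₂*(1-c₁) * E1 with hN
    have hNle' : N ≤ (1-c₂) * (c₁ * E2 + (1-c₁) * E1) := by
      have : (1-c₂) * (c₁ * E2 + (1-c₁) * E1) = N + (1-c₁)*(E1-E2) := by
        rw [hN]; ring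
      linarith
    rcases le_or_gt N 0 with hNle | hNpos
    · have h7 : ρ1p^2 * N ≤ 0 := mul_nonpos_of_nonneg_of_nonpos (sq_nonneg ρ1p) hNle
      linarith
    · calc ρ1p^2 * N ≤ ρ2p^2 * N := mul_le_mul_of_nonneg_right hρsq hNpos.le
        _ ≤ ρ2p^2 * ((1-c₂) * (c₁ * E2 + (1-c₁) * E1)) :=
            mul_le_mul_of_nonneg_left hNle' (sq_nonneg ρ2p)
        _ = ρ2p^2 * (1-c₂) * (c₁ * E2 + (1-c₁) * E1) := by ring
  refine ⟨key, fun h => ?_⟩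
  by_contra hcon
  exact absurd (key (le_of_not_gt hcon)) (not_le.mpr h)
end

section
/- For 0 ≤ x < a, W'(x) = (1-c₁)e^{-(ρ₁⁻+ρ₂⁻)a}(ρ₂⁻e^{ρ₂⁻x} - ρ₁⁻e^{ρ₁⁻x}) is strictly positive. -/
theorem W_deriv_pos_below_a (q a μp μm β : ℝ) (hq : 0 < q) (ha : 0 < a)
    (hβ : β ∈ Set.Ioo (-1 : ℝ) 1)
    (ρ1m ρ2m ρ1p c₁ : ℝ)
    (hρ1m : ρ1m = -(μm + Real.sqrt (μm^2 + 2*q)))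
    (hρ2m : ρ2m = -μm + Real.sqrt (μm^2 + 2*q))
    (hρ1p : ρ1p = -(μp + Real.sqrt (μp^2 + 2*q)))
    (hc₁ : c₁ = ((1+β)*ρ1p - (1-β)*ρ1m) / ((1-β)*(ρ2m - ρ1m))) :
    ∀ x, 0 ≤ x → x < a →
      0 < (1-c₁) * Real.exp (-(ρ1m+ρ2m)*a) *
        (ρ2m * Real.exp (ρ2m*x) - ρ1m * Real.exp (ρ1m*x)) := by
  obtain ⟨hβ1, hβ2⟩ := hβ
  have hsm : |μm| < Real.sqrt (μm^2 + 2*q) := by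
    rw [← Real.sqrt_sq_eq_abs]
    exact Real.sqrt_lt_sqrt (sq_nonneg _) (by linarith)
  have hsp : |μp| < Real.sqrt (μp^2 + 2*q) := by
    rw [← Real.sqrt_sq_eq_abs]
    exact Real.sqrt_lt_sqrt (sq_nonneg _) (by linarith)
  have h1 := neg_abs_le μm
  have h2 := le_abs_self μm
  have h3 := neg_abs_le μp
  have h1m : ρ1m < 0 := by rw [hρ1m]; linarith
  have h2m : 0 < ρ2m := by rw [hρ2m]; linarith
  have h1p : ρ1p < 0 := by rw [hρ1p]; linarith
  have hD : 0 < (1-β)*(ρ2m - ρ1m) := by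
    apply mul_pos (by linarith); linarith
  have hc : c₁ < 1 := by
    rw [hc₁, div_lt_one hD]
    nlinarith
  intro x hx hxa
  have hb : 0 < ρ2m * Real.exp (ρ2m*x) - ρ1m * Real.exp (ρ1m*x) := by
    have := Real.exp_pos (ρ2m*x)
    have := Real.exp_pos (ρ1m*x)
    nlinarith
  have := Real.exp_pos (-(ρ1m+ρ2m)*a)
  have h1c : 0 < 1 - c₁ := by linarith
  positivity
end

section
/- For x > a, W'(x) := ρ₂⁺(c₁e^{-ρ₂⁻a} + (1-c₁)e^{-ρ₁⁻a})(1-c₂)e^{ρ₂⁺(x-a)} - ρ₁⁺((1-c₁c₂)e^{-ρ₂⁻a} - c₂(1-c₁)e^{-ρ₁⁻a})e^{ρ₁⁺(x-a)} is strictly positive. -/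
/-! Both roots satisfy `ρ₁ < 0 < ρ₂`, so `(1+β)ρ₁⁺ < 0 < (1-β)ρ₂⁻`, which is exactly what makes
`c₁ < 1` and `c₂ < 1`. Write `W'(x) = P e^{ρ₂⁺(x-a)} - Q e^{ρ₁⁺(x-a)}` and
`A = c₁e^{-ρ₂⁻a} + (1-c₁)e^{-ρ₁⁻a}`. Since `a > 0`, `A` is at least `e^{-ρ₂⁻a} > 0`, so `P > 0`;
moreover `P - Q = A (ρ₂⁺ - c₂(ρ₂⁺ - ρ₁⁺)) - ρ₁⁺e^{-ρ₂⁻a}` and the bracket equals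
`(1-β)ρ₂⁻/(1+β) > 0`, so `Q < P`. As `ρ₁⁺ < ρ₂⁺`, the first exponential dominates the second for
`x > a`, and `W'(x) > 0` follows. -/

open Real

lemma abs_lt_sqrt_sq_add_s12 {μ r : ℝ} (hr : 0 < r) : |μ| < √(μ ^ 2 + r) := by
  rw [← sqrt_sq_eq_abs]
  exact sqrt_lt_sqrt (sq_nonneg μ) (by linarith)

lemma neg_add_sqrt_sq_add_neg {μ r : ℝ} (hr : 0 < r) : -(μ + √(μ ^ 2 + r)) < 0 := by
  linarith [(abs_lt.mp (abs_lt_sqrt_sq_add_s12 (μ := μ) hr)).1]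

lemma neg_add_sqrt_sq_add_pos_s12 {μ r : ℝ} (hr : 0 < r) : 0 < -μ + √(μ ^ 2 + r) := by
  linarith [(abs_lt.mp (abs_lt_sqrt_sq_add_s12 (μ := μ) hr)).2]

lemma mul_add_one_sub_mul_pos {c x y : ℝ} (hc : c ≤ 1) (hx : 0 < x) (hxy : x ≤ y) :
    0 < c * x + (1 - c) * y := by
  nlinarith [mul_nonneg (sub_nonneg.mpr hc) (sub_nonneg.mpr hxy)]

lemma mul_sub_mul_pos {P Q e₁ e₂ : ℝ} (hP : 0 < P) (hQP : Q < P) (he₁ : 0 < e₁) (he : e₁ < e₂) :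
    0 < P * e₂ - Q * e₁ := by
  have := mul_lt_mul_of_pos_right hQP he₁
  have := mul_lt_mul_of_pos_left he hP
  linarith

theorem W_deriv_pos_above_a (q a μp μm β : ℝ) (hq : 0 < q) (ha : 0 < a)
    (hβ : β ∈ Set.Ioo (-1 : ℝ) 1)
    (ρ1m ρ2m ρ1p ρ2p c₁ c₂ : ℝ)
    (hρ1m : ρ1m = -(μm + Real.sqrt (μm^2 + 2*q)))
    (hρ2m : ρ2m = -μm + Real.sqrt (μm^2 + 2*q))
    (hρ1p : ρ1p = -(μp + Real.sqrt (μp^2 + 2*q)))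
    (hρ2p : ρ2p = -μp + Real.sqrt (μp^2 + 2*q))
    (hc₁ : c₁ = ((1+β)*ρ1p - (1-β)*ρ1m) / ((1-β)*(ρ2m - ρ1m)))
    (hc₂ : c₂ = ((1+β)*ρ2p - (1-β)*ρ2m) / ((1+β)*(ρ2p - ρ1p))) :
    ∀ x, a < x →
      0 < ρ2p * (c₁ * Real.exp (-ρ2m*a) + (1-c₁) * Real.exp (-ρ1m*a)) * (1-c₂) *
            Real.exp (ρ2p*(x-a))
        - ρ1p * ((1-c₁*c₂) * Real.exp (-ρ2m*a) - c₂*(1-c₁) * Real.exp (-ρ1m*a)) *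
            Real.exp (ρ1p*(x-a)) := by
  obtain ⟨hβ₁, hβ₂⟩ := hβ
  have h2q : 0 < 2 * q := by positivity
  have hρ1p' : ρ1p < 0 := hρ1p ▸ neg_add_sqrt_sq_add_neg h2q
  have hρ2p' : 0 < ρ2p := hρ2p ▸ neg_add_sqrt_sq_add_pos_s12 h2q
  have hρ1m' : ρ1m < 0 := hρ1m ▸ neg_add_sqrt_sq_add_neg h2q
  have hρ2m' : 0 < ρ2m := hρ2m ▸ neg_add_sqrt_sq_add_pos_s12 h2q
  have hκ : (1+β)*ρ1p < (1-β)*ρ2m := by nlinarith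
  have hc₁_lt : c₁ < 1 := by
    rw [hc₁, div_lt_one (by nlinarith)]
    linarith
  have hc₂_lt : c₂ < 1 := by
    rw [hc₂, div_lt_one (by nlinarith)]
    linarith
  have hslope : ρ2p - c₂*(ρ2p - ρ1p) = (1-β)*ρ2m/(1+β) := by
    have : 1 + β ≠ 0 := by linarith
    have : ρ2p - ρ1p ≠ 0 := by linarith
    rw [hc₂]
    field_simp
    ring
  set E₂ := Real.exp (-ρ2m*a)
  set A := c₁ * E₂ + (1-c₁) * Real.exp (-ρ1m*a)
  have hA : 0 < A := mul_add_one_sub_mul_pos hc₁_lt.le (exp_pos _) (exp_le_exp.mpr (by nlinarith))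
  have hQP : ρ1p * ((1-c₁*c₂) * E₂ - c₂*(1-c₁) * Real.exp (-ρ1m*a)) < ρ2p * A * (1-c₂) := by
    have hdiff : ρ2p * A * (1-c₂) - ρ1p * ((1-c₁*c₂) * E₂ - c₂*(1-c₁) * Real.exp (-ρ1m*a))
        = A * (ρ2p - c₂*(ρ2p - ρ1p)) - ρ1p * E₂ := by ring
    rw [hslope] at hdiff
    have : 0 < A * ((1-β)*ρ2m/(1+β)) := mul_pos hA (div_pos (by nlinarith) (by linarith))
    have : 0 < -ρ1p * E₂ := mul_pos (neg_pos.mpr hρ1p') (exp_pos _)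
    linarith
  intro x hx
  exact mul_sub_mul_pos (mul_pos (mul_pos hρ2p' hA) (sub_pos.mpr hc₂_lt)) hQP (exp_pos _)
    (exp_lt_exp.mpr (mul_lt_mul_of_pos_right (by linarith) (by linarith)))
end

section
/- For β ∈ (-1,1), W'_β(a-) := (1-c₁(β))(ρ₂⁻e^{-ρ₁⁻a} - ρ₁⁻e^{-ρ₂⁻a}) is a strictly increasing function of β, where c₁(β) := ((1+β)ρ₁⁺ - (1-β)ρ₁⁻)/((1-β)(ρ₂⁻ - ρ₁⁻)). -/
theorem W_deriv_am_mono (q a μp μm : ℝ) (hq : 0 < q) (ha : 0 < a)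
    (ρ1m ρ2m ρ1p ρ2p : ℝ)
    (hρ1m : ρ1m = -(μm + Real.sqrt (μm^2 + 2*q)))
    (hρ2m : ρ2m = -μm + Real.sqrt (μm^2 + 2*q))
    (hρ1p : ρ1p = -(μp + Real.sqrt (μp^2 + 2*q)))
    (hρ2p : ρ2p = -μp + Real.sqrt (μp^2 + 2*q))
    (c₁ Wam : ℝ → ℝ)
    (hc₁ : ∀ β, c₁ β = ((1+β)*ρ1p - (1-β)*ρ1m) / ((1-β)*(ρ2m - ρ1m)))
    (hWam : ∀ β, Wam β = (1 - c₁ β) * (ρ2m * Real.exp (-ρ1m*a) - ρ1m * Real.exp (-ρ2m*a))) :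
    StrictMonoOn Wam (Set.Ioo (-1 : ℝ) 1) := by
  have hsm : |μm| < Real.sqrt (μm^2 + 2*q) := by
    rw [← Real.sqrt_sq_eq_abs]
    exact Real.sqrt_lt_sqrt (sq_nonneg _) (by linarith)
  have hsp : |μp| < Real.sqrt (μp^2 + 2*q) := by
    rw [← Real.sqrt_sq_eq_abs]
    exact Real.sqrt_lt_sqrt (sq_nonneg _) (by linarith)
  have habs_m := abs_le.mp (le_of_lt hsm)
  have habs_p := abs_le.mp (le_of_lt hsp)
  have h1m : ρ1m < 0 := by
    rw [hρ1m]
    have := (abs_lt.mp hsm).1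
    linarith
  have h2m : 0 < ρ2m := by
    rw [hρ2m]
    have := (abs_lt.mp hsm).2
    linarith
  have h1p : ρ1p < 0 := by
    rw [hρ1p]
    have := (abs_lt.mp hsp).1
    linarith
  have hd : 0 < ρ2m - ρ1m := by linarith
  have hK : 0 < ρ2m * Real.exp (-ρ1m*a) - ρ1m * Real.exp (-ρ2m*a) := by
    have e1 : 0 < Real.exp (-ρ1m*a) := Real.exp_pos _
    have e2 : 0 < Real.exp (-ρ2m*a) := Real.exp_pos _
    nlinarith
  intro x hx y hy hxy
  obtain ⟨hx1, hx2⟩ := hx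
  obtain ⟨hy1, hy2⟩ := hy
  have h1x : 0 < 1 - x := by linarith
  have h1y : 0 < 1 - y := by linarith
  have hc : c₁ y < c₁ x := by
    rw [hc₁, hc₁, div_lt_div_iff₀ (by positivity) (by positivity)]
    nlinarith [mul_pos hd (mul_pos (sub_pos.mpr hxy) (neg_pos.mpr h1p))]
  rw [hWam, hWam]
  nlinarith [mul_pos (sub_pos.mpr hc) hK]
end

section
/- With c₁, c₂ and ρ's as defined, the derivative of 1 - c₁(β)c₂(β) with respect to β equals 16qβ/((1-β²)²(ρ₂⁻ - ρ₁⁻)(ρ₂⁺ - ρ₁⁺)), and the derivative of c₂(β)(1 - c₁(β)) equals (2ρ₂⁻²(1-β)² + 4q(1+β)²)/((1+β)²(1-β)²(ρ₂⁻ - ρ₁⁻)(ρ₂⁺ - ρ₁⁺)). -/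
/-! Writing `1 ± β = 2 - (1 ∓ β)` shows `c₁(β) = 2ρ₁⁺ / ((1 - β)(ρ₂⁻ - ρ₁⁻)) + const` and
`c₂(β) = const - 2ρ₂⁻ / ((1 + β)(ρ₂⁺ - ρ₁⁺))`, so `c₁' = 2ρ₁⁺ / ((1 - β)²(ρ₂⁻ - ρ₁⁻))` and
`c₂' = 2ρ₂⁻ / ((1 + β)²(ρ₂⁺ - ρ₁⁺))`. The product rule then leaves two rational identities, which
hold modulo `ρ₁⁻ρ₂⁻ = ρ₁⁺ρ₂⁺ = -2q`. -/

theorem hasDerivAt_linear_div_one_sub (a c d : ℝ) {β : ℝ} (hβ : β ≠ 1) :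
    HasDerivAt (fun b => ((1 + b) * a - (1 - b) * c) / ((1 - b) * d))
      (2 * a / ((1 - β) ^ 2 * d)) β := by
  rcases eq_or_ne d 0 with rfl | hd
  · simpa using hasDerivAt_const β (0 : ℝ)
  have hβ' : 1 - β ≠ 0 := sub_ne_zero.mpr hβ.symm
  have := ((((hasDerivAt_id' β).const_add 1).mul_const a).fun_sub
    (((hasDerivAt_id' β).const_sub 1).mul_const c)).fun_div
    (((hasDerivAt_id' β).const_sub 1).mul_const d) (mul_ne_zero hβ' hd)
  refine this.congr_deriv ?_
  field_simp
  ring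

theorem hasDerivAt_linear_div_one_add (a c d : ℝ) {β : ℝ} (hβ : β ≠ -1) :
    HasDerivAt (fun b => ((1 + b) * a - (1 - b) * c) / ((1 + b) * d))
      (2 * c / ((1 + β) ^ 2 * d)) β := by
  rcases eq_or_ne d 0 with rfl | hd
  · simpa using hasDerivAt_const β (0 : ℝ)
  have hβ' : 1 + β ≠ 0 := by contrapose! hβ; linarith
  have := ((((hasDerivAt_id' β).const_add 1).mul_const a).fun_sub
    (((hasDerivAt_id' β).const_sub 1).mul_const c)).fun_div
    (((hasDerivAt_id' β).const_add 1).mul_const d) (mul_ne_zero hβ' hd)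
  refine this.congr_deriv ?_
  field_simp
  ring

theorem neg_add_sqrt_mul_neg_add_sqrt {μ q : ℝ} (hq : 0 ≤ q) :
    -(μ + √(μ ^ 2 + 2 * q)) * (-μ + √(μ ^ 2 + 2 * q)) = -2 * q := by
  have := Real.sq_sqrt (by positivity : 0 ≤ μ ^ 2 + 2 * q)
  linear_combination -this

theorem neg_add_sqrt_sub_neg_add_sqrt_ne_zero {μ q : ℝ} (hq : 0 < q) :
    -μ + √(μ ^ 2 + 2 * q) - -(μ + √(μ ^ 2 + 2 * q)) ≠ 0 := by
  have : 0 < √(μ ^ 2 + 2 * q) := Real.sqrt_pos.mpr (by positivity)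
  linarith

theorem c_product_derivatives (q μp μm : ℝ) (hq : 0 < q)
    (ρ1m ρ2m ρ1p ρ2p : ℝ)
    (hρ1m : ρ1m = -(μm + Real.sqrt (μm^2 + 2*q)))
    (hρ2m : ρ2m = -μm + Real.sqrt (μm^2 + 2*q))
    (hρ1p : ρ1p = -(μp + Real.sqrt (μp^2 + 2*q)))
    (hρ2p : ρ2p = -μp + Real.sqrt (μp^2 + 2*q))
    (c₁ c₂ : ℝ → ℝ)
    (hc₁ : ∀ β, c₁ β = ((1+β)*ρ1p - (1-β)*ρ1m) / ((1-β)*(ρ2m - ρ1m)))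
    (hc₂ : ∀ β, c₂ β = ((1+β)*ρ2p - (1-β)*ρ2m) / ((1+β)*(ρ2p - ρ1p))) :
    ∀ β ∈ Set.Ioo (-1 : ℝ) 1,
      HasDerivAt (fun b => 1 - c₁ b * c₂ b)
        (16*q*β / ((1-β^2)^2 * (ρ2m - ρ1m) * (ρ2p - ρ1p))) β ∧
      HasDerivAt (fun b => c₂ b * (1 - c₁ b))
        ((2*ρ2m^2*(1-β)^2 + 4*q*(1+β)^2) /
          ((1+β)^2 * (1-β)^2 * (ρ2m - ρ1m) * (ρ2p - ρ1p))) β := by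
  rintro β ⟨hβ₁, hβ₂⟩
  have hm : ρ1m * ρ2m = -2 * q := hρ1m ▸ hρ2m ▸ neg_add_sqrt_mul_neg_add_sqrt hq.le
  have hp : ρ1p * ρ2p = -2 * q := hρ1p ▸ hρ2p ▸ neg_add_sqrt_mul_neg_add_sqrt hq.le
  have hK : ρ2m - ρ1m ≠ 0 := hρ1m ▸ hρ2m ▸ neg_add_sqrt_sub_neg_add_sqrt_ne_zero hq
  have hM : ρ2p - ρ1p ≠ 0 := hρ1p ▸ hρ2p ▸ neg_add_sqrt_sub_neg_add_sqrt_ne_zero hq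
  have h₁ : 1 - β ≠ 0 := by linarith
  have h₂ : 1 + β ≠ 0 := by linarith
  have d₁ : HasDerivAt c₁ (2 * ρ1p / ((1 - β) ^ 2 * (ρ2m - ρ1m))) β :=
    funext hc₁ ▸ hasDerivAt_linear_div_one_sub ρ1p ρ1m _ hβ₂.ne
  have d₂ : HasDerivAt c₂ (2 * ρ2m / ((1 + β) ^ 2 * (ρ2p - ρ1p))) β :=
    funext hc₂ ▸ hasDerivAt_linear_div_one_add ρ2p ρ2m _ hβ₁.ne'
  constructor
  · refine ((d₁.mul d₂).const_sub 1).congr_deriv ?_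
    rw [hc₁, hc₂, show (1 - β ^ 2) ^ 2 = (1 - β) ^ 2 * (1 + β) ^ 2 by ring]
    field_simp
    linear_combination (-2 * (1 + β) ^ 2) * hp + (2 * (1 - β) ^ 2) * hm
  · refine (d₂.mul (d₁.const_sub 1)).congr_deriv ?_
    rw [hc₁, hc₂]
    field_simp
    linear_combination (-2 * (1 + β) ^ 2) * hp
end

section
/- For 0 ≤ a₁ ≤ a < b₂ the quantity w_{b₂}(b₂,a₁) := ρ₂⁺(1-c₂)(c₁e^{ρ₂⁻(a₁-a)} + (1-c₁)e^{ρ₁⁻(a₁-a)})e^{ρ₂⁺(b₂-a)} - ρ₁⁺((1-c₁c₂)e^{ρ₂⁻(a₁-a)} - c₂(1-c₁)e^{ρ₁⁻(a₁-a)})e^{ρ₁⁺(b₂-a)} is strictly positive. -/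
lemma sqrt_gt_abs_aux (μ q : ℝ) (hq : 0 < q) : |μ| < Real.sqrt (μ^2 + 2*q) := by
  have h : |μ| = Real.sqrt (μ^2) := (Real.sqrt_sq_eq_abs μ).symm
  rw [h]
  exact Real.sqrt_lt_sqrt (sq_nonneg μ) (by linarith)

theorem w_b2_pos (q a μp μm β a₁ b₂ : ℝ) (hq : 0 < q)
    (hβ : β ∈ Set.Ioo (-1 : ℝ) 1)
    (ha₁ : 0 ≤ a₁) (ha₁a : a₁ ≤ a) (hab₂ : a < b₂)
    (ρ1m ρ2m ρ1p ρ2p c₁ c₂ : ℝ)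
    (hρ1m : ρ1m = -(μm + Real.sqrt (μm^2 + 2*q)))
    (hρ2m : ρ2m = -μm + Real.sqrt (μm^2 + 2*q))
    (hρ1p : ρ1p = -(μp + Real.sqrt (μp^2 + 2*q)))
    (hρ2p : ρ2p = -μp + Real.sqrt (μp^2 + 2*q))
    (hc₁ : c₁ = ((1+β)*ρ1p - (1-β)*ρ1m) / ((1-β)*(ρ2m - ρ1m)))
    (hc₂ : c₂ = ((1+β)*ρ2p - (1-β)*ρ2m) / ((1+β)*(ρ2p - ρ1p))) :
    0 < ρ2p * (1-c₂) * (c₁ * Real.exp (ρ2m*(a₁-a)) + (1-c₁) * Real.exp (ρ1m*(a₁-a))) *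
          Real.exp (ρ2p*(b₂-a))
      - ρ1p * ((1-c₁*c₂) * Real.exp (ρ2m*(a₁-a)) - c₂*(1-c₁) * Real.exp (ρ1m*(a₁-a))) *
          Real.exp (ρ1p*(b₂-a)) := by
  obtain ⟨hβ1, hβ2⟩ := hβ
  have hβp : (0:ℝ) < 1 + β := by linarith
  have hβm : (0:ℝ) < 1 - β := by linarith
  have habsp := sqrt_gt_abs_aux μp q hq
  have habsm := sqrt_gt_abs_aux μm q hq
  have hμp1 : μp < Real.sqrt (μp^2 + 2*q) := lt_of_le_of_lt (le_abs_self μp) habsp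
  have hμp2 : -μp < Real.sqrt (μp^2 + 2*q) := lt_of_le_of_lt (neg_le_abs μp) habsp
  have hμm1 : μm < Real.sqrt (μm^2 + 2*q) := lt_of_le_of_lt (le_abs_self μm) habsm
  have hμm2 : -μm < Real.sqrt (μm^2 + 2*q) := lt_of_le_of_lt (neg_le_abs μm) habsm
  have hp2 : 0 < ρ2p := by rw [hρ2p]; linarith
  have hp1 : ρ1p < 0 := by rw [hρ1p]; linarith
  have hm2 : 0 < ρ2m := by rw [hρ2m]; linarith
  have hm1 : ρ1m < 0 := by rw [hρ1m]; linarith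
  clear hρ1m hρ2m hρ1p hρ2p habsp habsm hμp1 hμp2 hμm1 hμm2
  -- basic product facts
  have hx1 : 0 < (1-β)*ρ2m := mul_pos hβm hm2
  have hx2 : (1+β)*ρ1p < 0 := mul_neg_of_pos_of_neg hβp hp1
  -- denominators
  have hD1 : 0 < (1-β)*(ρ2m - ρ1m) := mul_pos hβm (by linarith)
  have hD2 : 0 < (1+β)*(ρ2p - ρ1p) := mul_pos hβp (by linarith)
  -- 1 - c₁ > 0, 1 - c₂ > 0
  have h1c1 : 0 < 1 - c₁ := by
    have h : c₁ < 1 := by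
      rw [hc₁, div_lt_one hD1]
      have hw : (1-β)*(ρ2m-ρ1m) = (1-β)*ρ2m - (1-β)*ρ1m := by ring
      rw [hw]; linarith
    linarith
  have h1c2 : 0 < 1 - c₂ := by
    have h : c₂ < 1 := by
      rw [hc₂, div_lt_one hD2]
      have hw : (1+β)*(ρ2p-ρ1p) = (1+β)*ρ2p - (1+β)*ρ1p := by ring
      rw [hw]; linarith
    linarith
  -- key identity
  set K := (1-β)*ρ2m/(1+β) with hKdef
  have hK : 0 < K := div_pos hx1 hβp
  have hkey : ρ2p*(1-c₂) + ρ1p*c₂ = K := by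
    rw [hc₂, hKdef]
    have h1 : (1+β) ≠ 0 := ne_of_gt hβp
    have h2 : ρ2p - ρ1p ≠ 0 := ne_of_gt (by linarith)
    field_simp
    ring
  -- exponentials
  set E2 := Real.exp (ρ2m*(a₁-a)) with hE2def
  set E1 := Real.exp (ρ1m*(a₁-a)) with hE1def
  have hE2 : 0 < E2 := Real.exp_pos _
  have hE1 : 0 < E1 := Real.exp_pos _
  have hE21 : E2 ≤ E1 := by
    apply Real.exp_le_exp.mpr
    have h := mul_nonneg (by linarith : (0:ℝ) ≤ ρ2m - ρ1m) (by linarith : (0:ℝ) ≤ a - a₁)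
    nlinarith [h]
  set A := c₁ * E2 + (1-c₁) * E1 with hAdef
  set B := (1-c₁*c₂) * E2 - c₂*(1-c₁) * E1 with hBdef
  have hA : E2 ≤ A := by
    have h := mul_nonneg h1c1.le (by linarith : (0:ℝ) ≤ E1 - E2)
    rw [hAdef]; linarith [h]
  have hApos : 0 < A := lt_of_lt_of_le hE2 hA
  -- value at t = 0
  have hid : ρ2p*(1-c₂)*A - ρ1p*B
      = (-ρ1p + c₁*(ρ2p*(1-c₂) + ρ1p*c₂))*E2 + (1-c₁)*(ρ2p*(1-c₂) + ρ1p*c₂)*E1 := by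
    rw [hAdef, hBdef]; ring
  have hW0 : 0 < ρ2p*(1-c₂)*A - ρ1p*B := by
    rw [hid, hkey]
    have h3 : 0 ≤ (1-c₁)*K*(E1-E2) :=
      mul_nonneg (mul_nonneg h1c1.le hK.le) (by linarith)
    have h4 : 0 < (-ρ1p+K)*E2 := mul_pos (by linarith) hE2
    linarith [h3, h4]
  -- exponentials in t
  set F2 := Real.exp (ρ2p*(b₂-a)) with hF2def
  set F1 := Real.exp (ρ1p*(b₂-a)) with hF1def
  have hF2 : 1 < F2 := by
    rw [hF2def, ← Real.exp_zero]
    exact Real.exp_lt_exp.mpr (mul_pos hp2 (by linarith))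
  have hF1 : F1 < 1 := by
    rw [hF1def, ← Real.exp_zero]
    exact Real.exp_lt_exp.mpr (mul_neg_of_neg_of_pos hp1 (by linarith))
  have hF1pos : 0 < F1 := Real.exp_pos _
  have hT1 : 0 < ρ2p*(1-c₂)*A := mul_pos (mul_pos hp2 h1c2) hApos
  show 0 < ρ2p*(1-c₂)*A * F2 - ρ1p*B * F1
  rcases le_or_gt 0 B with hB | hB
  · have h5 : 0 < ρ2p*(1-c₂)*A*F2 := mul_pos hT1 (by linarith)
    have h6 : ρ1p*(B*F1) ≤ 0 :=
      mul_nonpos_iff.mpr (Or.inr ⟨hp1.le, mul_nonneg hB hF1pos.le⟩)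
    linarith [h5, h6]
  · have hρ1pB : 0 < ρ1p * B := mul_pos_of_neg_of_neg hp1 hB
    have h7 : 0 < (ρ2p*(1-c₂)*A)*(F2-1) := mul_pos hT1 (by linarith)
    have h8 : 0 < (ρ1p*B)*(1-F1) := mul_pos hρ1pB (by linarith)
    linarith [hW0, h7, h8]
end
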